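/- Let X be in dgPer(A), and let φ : A → B be a morphism of positively graded dg algebras with zero differential whose degree-0 components are finite products of division rings, with φ⁰ an isomorphism. For any segment I, X lies in dgPer^I(A) if and only if X ⊗^L_A B lies in dgPer^I(B). -/

import Mathlib

/-!
STATEMENT 14: Let `φ : A → B` be a morphism of positively graded dg algebras
with zero differential whose degree-0 components are finite products of
division rings, with `φ⁰` an isomorphism.  For `X ∈ dgPer(A)` and any segment
`I = [a,b]`, `X` lies in `dgPer^I(A)` if and only if `X ⊗^L_A B` lies in
`dgPer^I(B)`.

As in STATEMENT 13, objects of `dgPer` are represented by their `dgFilt`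
presentations (matrix presentations of filtered dg modules with free graded
underlying module); by the filtered dg module theorem, membership in
`dgPer^I` means: homotopy equivalent to a presentation generated in degrees
`-l_k ∈ [a,b]`.  Extension of scalars applies `φ` to all matrix entries.
-/

/-- A (ℤ-)graded algebra, componentwise (a positively graded dg algebra with
zero differential is exactly such a graded algebra supported in nonnegative
degrees). -/
structure GrAlg where
  R : ℤ → Type
  [acg : ∀ n, AddCommGroup (R n)]
  mul : ∀ {m n p : ℤ}, m + n = p → R m → R n → R p
  one : R 0
  mul_add : ∀ {m n p : ℤ} (h : m + n = p) (a : R m) (b c : R n),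
    mul h a (b + c) = mul h a b + mul h a c
  add_mul : ∀ {m n p : ℤ} (h : m + n = p) (a b : R m) (c : R n),
    mul h (a + b) c = mul h a c + mul h b c
  assoc : ∀ {m n p s t q : ℤ} (h1 : m + n = s) (h2 : s + p = q)
    (h3 : n + p = t) (h4 : m + t = q) (a : R m) (b : R n) (c : R p),
    mul h2 (mul h1 a b) c = mul h4 a (mul h3 b c)
  one_mul : ∀ {n : ℤ} (a : R n), mul (zero_add n) one a = a
  mul_one : ∀ {n : ℤ} (a : R n), mul (add_zero n) a one = a

attribute [instance] GrAlg.acg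

namespace GrAlg

variable (A : GrAlg)

/-- positively graded -/
def Pos : Prop := ∀ n : ℤ, n < 0 → Subsingleton (A.R n)

variable {A}

lemma mul_zero' {m n p : ℤ} (h : m + n = p) (a : A.R m) :
    A.mul h a (0 : A.R n) = 0 := by
  have h0 := A.mul_add h a 0 0
  rw [add_zero] at h0
  exact left_eq_add.mp h0

lemma zero_mul' {m n p : ℤ} (h : m + n = p) (c : A.R n) :
    A.mul h (0 : A.R m) c = 0 := by
  have h0 := A.add_mul h 0 0 c
  rw [add_zero] at h0
  exact left_eq_add.mp h0

lemma mul_neg' {m n p : ℤ} (h : m + n = p) (a : A.R m) (b : A.R n) :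
    A.mul h a (-b) = -A.mul h a b := by
  have h0 := A.mul_add h a b (-b)
  rw [add_neg_cancel, mul_zero'] at h0
  exact (neg_eq_of_add_eq_zero_right h0.symm).symm

end GrAlg

/-- A complete system of orthogonal idempotents of `A⁰` exhibiting `A⁰` as a
finite product of division rings. -/
structure IdemData (A : GrAlg) (ι : Type) [Fintype ι] where
  e : ι → A.R 0
  idem : ∀ x, A.mul (zero_add 0) (e x) (e x) = e x
  orth : ∀ x y, x ≠ y → A.mul (zero_add 0) (e x) (e y) = 0
  sum_one : ∑ x, e x = A.one
  /-- `e_x A⁰ e_y = 0` for `x ≠ y` -/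
  offdiag : ∀ x y, x ≠ y → ∀ a : A.R 0,
    A.mul (zero_add 0) (e x) (A.mul (add_zero 0) a (e y)) = 0
  /-- each `e_x A⁰ e_x` is a division ring -/
  div : ∀ (x : ι) (a : A.R 0),
    A.mul (zero_add 0) (e x) (A.mul (add_zero 0) a (e x)) = a → a ≠ 0 →
    ∃ b : A.R 0, A.mul (zero_add 0) (e x) (A.mul (add_zero 0) b (e x)) = b ∧
      A.mul (zero_add 0) a b = e x ∧ A.mul (zero_add 0) b a = e x

namespace IdemData

variable {A : GrAlg} {ι : Type} [Fintype ι] (E : IdemData A ι)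

/-- The block `e_x A^m e_y`, as an additive subgroup of `A^m`. -/
def blkSubgroup (m : ℤ) (x y : ι) : AddSubgroup (A.R m) where
  carrier := {r | A.mul (zero_add m) (E.e x) r = r ∧ A.mul (add_zero m) r (E.e y) = r}
  add_mem' := by
    rintro a b ⟨ha1, ha2⟩ ⟨hb1, hb2⟩
    constructor
    · rw [A.mul_add, ha1, hb1]
    · rw [A.add_mul, ha2, hb2]
  zero_mem' := by
    constructor
    · exact GrAlg.mul_zero' _ _
    · exact GrAlg.zero_mul' _ _
  neg_mem' := by
    rintro a ⟨ha1, ha2⟩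
    constructor
    · rw [GrAlg.mul_neg', ha1]
    · show A.mul (add_zero m) (-a) (E.e y) = -a
      have h0 := A.add_mul (add_zero m) a (-a) (E.e y)
      rw [add_neg_cancel, GrAlg.zero_mul'] at h0
      rw [(neg_eq_of_add_eq_zero_right h0.symm).symm, ha2]

/-- An element of the block `e_x A^m e_y`. -/
abbrev Blk (m : ℤ) (x y : ι) : Type := ↥(E.blkSubgroup m x y)

/-- Multiplication of block elements. -/
def blkMul {m n p : ℤ} (h : m + n = p) {x y z : ι}
    (a : E.Blk m x y) (b : E.Blk n y z) : E.Blk p x z := by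
  refine ⟨A.mul h a.1 b.1, ?_, ?_⟩
  · rw [← A.assoc (zero_add m) h h (zero_add p) (E.e x) a.1 b.1, a.2.1]
  · rw [A.assoc h (add_zero p) (add_zero n) h a.1 b.1 (E.e z), b.2.2]

/-- Transport of a block element along an equality of degrees. -/
def castBlk {m m' : ℤ} (h : m = m') {x y : ι} (a : E.Blk m x y) : E.Blk m' x y :=
  h ▸ a

end IdemData

/-- A `dgFilt` presentation of an object of `dgPer(A)`: a dg module which, as
a graded module, is `⊕_k {l_k} e_{v_k} A` with a (strictly triangular) matrix
differential `x` of square zero; the shifts `l` are decreasing, giving the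
filtration with subquotients `{l_k} e_{v_k} A`. -/
structure DGData {ι : Type} [Fintype ι] {A : GrAlg} (E : IdemData A ι) where
  s : ℕ
  v : Fin s → ι
  l : Fin s → ℤ
  lanti : ∀ i j : Fin s, i ≤ j → l j ≤ l i
  x : ∀ i j : Fin s, E.Blk (l i + 1 - l j) (v i) (v j)
  tri : ∀ i j : Fin s, j ≤ i → x i j = 0
  x_sq : ∀ i j : Fin s,
    (∑ k : Fin s, E.blkMul
      (show (l i + 1 - l k) + (l k + 1 - l j) = l i + 2 - l j by omega)
      (x i k) (x k j)) = 0

namespace DGData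

variable {ι : Type} [Fintype ι] {A : GrAlg} {E : IdemData A ι}

/-- The presentation lies in the window `dgPer^{[a,b]}`: it is generated in
degrees `-l_k ∈ [a, b]`. -/
def InWindow (X : DGData E) (a b : ℤ) : Prop :=
  ∀ k : Fin X.s, a ≤ -X.l k ∧ -X.l k ≤ b

/-- A morphism of dg modules in terms of presentations: a matrix commuting
with the differentials. -/
structure Map (X Y : DGData E) where
  f : ∀ (i : Fin Y.s) (j : Fin X.s), E.Blk (Y.l i - X.l j) (Y.v i) (X.v j)
  comm : ∀ (i : Fin Y.s) (j : Fin X.s),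
    (∑ k : Fin Y.s, E.blkMul
        (show (Y.l i + 1 - Y.l k) + (Y.l k - X.l j) = Y.l i + 1 - X.l j by omega)
        (Y.x i k) (f k j)) =
    (∑ k : Fin X.s, E.blkMul
        (show (Y.l i - X.l k) + (X.l k + 1 - X.l j) = Y.l i + 1 - X.l j by omega)
        (f i k) (X.x k j))

/-- Two morphisms are homotopic if their difference is `y ∘ h + h ∘ x` for a
degree `-1` matrix `h`. -/
def Homotopic {X Y : DGData E} (f g : Map X Y) : Prop :=
  ∃ h : ∀ (i : Fin Y.s) (j : Fin X.s), E.Blk (Y.l i - 1 - X.l j) (Y.v i) (X.v j),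
    ∀ (i : Fin Y.s) (j : Fin X.s),
      f.f i j - g.f i j =
        (∑ k : Fin Y.s, E.blkMul
          (show (Y.l i + 1 - Y.l k) + (Y.l k - 1 - X.l j) = Y.l i - X.l j by omega)
          (Y.x i k) (h k j))
        + (∑ k : Fin X.s, E.blkMul
          (show (Y.l i - 1 - X.l k) + (X.l k + 1 - X.l j) = Y.l i - X.l j by omega)
          (h i k) (X.x k j))

/-- The entries of the identity morphism. -/
def idEntry (X : DGData E) (i j : Fin X.s) : E.Blk (X.l i - X.l j) (X.v i) (X.v j) :=
  if h : i = j then by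
    subst h
    exact E.castBlk (by omega) ⟨E.e (X.v i), E.idem _, E.idem _⟩
  else 0

/-- The composite matrix of two morphisms. -/
def compEntry {X Y Z : DGData E} (f : Map X Y) (g : Map Y Z)
    (i : Fin Z.s) (j : Fin X.s) : E.Blk (Z.l i - X.l j) (Z.v i) (X.v j) :=
  ∑ k : Fin Y.s, E.blkMul
    (show (Z.l i - Y.l k) + (Y.l k - X.l j) = Z.l i - X.l j by omega)
    (g.f i k) (f.f k j)

end DGData

/-- A morphism of graded algebras (a dg algebra morphism between dg algebras
with zero differential). -/
structure GrHom (A B : GrAlg) where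
  f : ∀ n, A.R n →+ B.R n
  f_one : f 0 A.one = B.one
  f_mul : ∀ {m n p : ℤ} (h : m + n = p) (a : A.R m) (b : A.R n),
    f p (A.mul h a b) = B.mul h (f m a) (f n b)

namespace GrHom

variable {A B : GrAlg} {ι : Type} [Fintype ι]
  {EA : IdemData A ι} {EB : IdemData B ι}

/-- `φ` applied to a block element, given that `φ` matches the idempotents. -/
def mapBlk (φ : GrHom A B) (hφe : ∀ x, φ.f 0 (EA.e x) = EB.e x)
    {m : ℤ} {x y : ι} (a : EA.Blk m x y) : EB.Blk m x y := by
  refine ⟨φ.f m a.1, ?_, ?_⟩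
  · rw [← hφe, ← φ.f_mul, a.2.1]
  · rw [← hφe, ← φ.f_mul, a.2.2]

lemma mapBlk_mul (φ : GrHom A B) (hφe : ∀ x, φ.f 0 (EA.e x) = EB.e x)
    {m n p : ℤ} (h : m + n = p) {x y z : ι} (a : EA.Blk m x y) (b : EA.Blk n y z) :
    φ.mapBlk hφe (EA.blkMul h a b) = EB.blkMul h (φ.mapBlk hφe a) (φ.mapBlk hφe b) :=
  Subtype.ext (φ.f_mul h a.1 b.1)

lemma mapBlk_addHom (φ : GrHom A B) (hφe : ∀ x, φ.f 0 (EA.e x) = EB.e x)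
    {m : ℤ} {x y : ι} (a b : EA.Blk m x y) :
    φ.mapBlk hφe (a + b) = φ.mapBlk hφe a + φ.mapBlk hφe b :=
  Subtype.ext (map_add (φ.f m) a.1 b.1)

/-- `mapBlk` as an additive monoid morphism. -/
def mapBlkHom (φ : GrHom A B) (hφe : ∀ x, φ.f 0 (EA.e x) = EB.e x)
    (m : ℤ) (x y : ι) : EA.Blk m x y →+ EB.Blk m x y where
  toFun := φ.mapBlk hφe
  map_zero' := Subtype.ext (map_zero (φ.f m))
  map_add' := φ.mapBlk_addHom hφe

@[simp] lemma mapBlkHom_apply (φ : GrHom A B) (hφe : ∀ x, φ.f 0 (EA.e x) = EB.e x)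
    {m : ℤ} {x y : ι} (a : EA.Blk m x y) :
    φ.mapBlkHom hφe m x y a = φ.mapBlk hφe a := rfl

/-- Extension of scalars of a presentation along `φ`: apply `φ` to all the
entries of the matrix differential. -/
def mapData (φ : GrHom A B) (hφe : ∀ x, φ.f 0 (EA.e x) = EB.e x)
    (X : DGData EA) : DGData EB where
  s := X.s
  v := X.v
  l := X.l
  lanti := X.lanti
  x i j := φ.mapBlk hφe (X.x i j)
  tri i j hij := by
    show φ.mapBlk hφe (X.x i j) = 0
    rw [X.tri i j hij]
    exact Subtype.ext (map_zero (φ.f _))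
  x_sq i j := by
    try dsimp only
    have h2 := congrArg (φ.mapBlkHom hφe (X.l i + 2 - X.l j) (X.v i) (X.v j)) (X.x_sq i j)
    rw [map_sum, map_zero] at h2
    rw [← h2]
    refine Finset.sum_congr rfl fun k _ => ?_
    rw [mapBlkHom_apply, φ.mapBlk_mul hφe]

end GrHom

namespace DGData

variable {ι : Type} [Fintype ι] {A : GrAlg} {E : IdemData A ι}

/-- Homotopy of raw matrices (with the degrees of morphism matrices). -/
def EntriesHomotopic (X Y : DGData E)
    (F G : ∀ (i : Fin Y.s) (j : Fin X.s), E.Blk (Y.l i - X.l j) (Y.v i) (X.v j)) :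
    Prop :=
  ∃ h : ∀ (i : Fin Y.s) (j : Fin X.s), E.Blk (Y.l i - 1 - X.l j) (Y.v i) (X.v j),
    ∀ (i : Fin Y.s) (j : Fin X.s),
      F i j - G i j =
        (∑ k : Fin Y.s, E.blkMul
          (show (Y.l i + 1 - Y.l k) + (Y.l k - 1 - X.l j) = Y.l i - X.l j by omega)
          (Y.x i k) (h k j))
        + (∑ k : Fin X.s, E.blkMul
          (show (Y.l i - 1 - X.l k) + (X.l k + 1 - X.l j) = Y.l i - X.l j by omega)
          (h i k) (X.x k j))

/-- Homotopy equivalence of presentations: morphisms in both directions whose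
composites are homotopic to the identity matrices. -/
def HtpyEquiv (X Y : DGData E) : Prop :=
  ∃ (f : Map X Y) (g : Map Y X),
    EntriesHomotopic X X (compEntry f g) (idEntry X)
    ∧ EntriesHomotopic Y Y (compEntry g f) (idEntry Y)

end DGData

/-!
Over a positively graded algebra the differential of a `dgFilt` presentation only has entries
of degree `≥ 1` (it is strictly triangular and the shifts decrease), so a homotopy contributes
nothing to a diagonal entry. Hence if `X ≃ Y`, the identity of a generator `j` of `X` factors
through the degree-`0` entries of `Y → X` and `X → Y`, which vanish unless `Y` has a generator
of the same shift `l_j`. So `X` is equivalent to a presentation in the window exactly when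
`e_{v_j} = 0` for every generator `j` outside it; conversely, the generators with `e_{v_j} = 0`
can simply be deleted. Extension of scalars keeps `v` and `l`, and the injective `φ⁰` sends
`e_x` to `e_x`, so this criterion holds for `X` iff it holds for `X ⊗_A B`.
-/

namespace IdemData

variable {A : GrAlg} {ι : Type} [Fintype ι] {E : IdemData A ι}

@[simp] lemma blkMul_zero {m n p : ℤ} (h : m + n = p) {x y z : ι} (a : E.Blk m x y) :
    E.blkMul h a (0 : E.Blk n y z) = 0 :=
  Subtype.ext (GrAlg.mul_zero' h a.1)

@[simp] lemma zero_blkMul {m n p : ℤ} (h : m + n = p) {x y z : ι} (b : E.Blk n y z) :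
    E.blkMul h (0 : E.Blk m x y) b = 0 :=
  Subtype.ext (GrAlg.zero_mul' h b.1)

lemma castBlk_eq_zero_iff {m m' : ℤ} (h : m = m') {x y : ι} (a : E.Blk m x y) :
    E.castBlk h a = 0 ↔ a = 0 := by
  subst h; rfl

lemma blk_eq_zero_of_neg (hpos : A.Pos) {m : ℤ} (hm : m < 0) {x y : ι}
    (a : E.Blk m x y) : a = 0 :=
  haveI := hpos m hm
  Subsingleton.elim _ _

lemma blk_eq_zero_of_right {m : ℤ} {x y : ι} (he : E.e y = 0) (a : E.Blk m x y) : a = 0 := by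
  refine Subtype.ext ?_
  rw [← a.2.2, he]
  exact GrAlg.mul_zero' _ _

variable (E) in
def unitBlk (x : ι) : E.Blk 0 x x := ⟨E.e x, E.idem x, E.idem x⟩

lemma unitBlk_eq_zero_iff (x : ι) : E.unitBlk x = 0 ↔ E.e x = 0 :=
  Subtype.ext_iff

lemma blkMul_castBlk_unitBlk {x y : ι} {m n : ℤ} (h : m + n = m) (h0 : 0 = n)
    (a : E.Blk m x y) : E.blkMul h a (E.castBlk h0 (E.unitBlk y)) = a := by
  subst h0
  exact Subtype.ext a.2.2

lemma castBlk_unitBlk_blkMul {x y : ι} {m n : ℤ} (h : m + n = n) (h0 : 0 = m)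
    (b : E.Blk n x y) : E.blkMul h (E.castBlk h0 (E.unitBlk x)) b = b := by
  subst h0
  exact Subtype.ext b.2.1

end IdemData

namespace DGData

variable {ι : Type} [Fintype ι] {A : GrAlg} {E : IdemData A ι}

lemma idEntry_self (X : DGData E) (i : Fin X.s) :
    X.idEntry i i = E.castBlk (by omega) (E.unitBlk (X.v i)) :=
  dif_pos rfl

lemma idEntry_of_ne (X : DGData E) {i j : Fin X.s} (h : i ≠ j) : X.idEntry i j = 0 :=
  dif_neg h

lemma idEntry_eq_zero_iff (X : DGData E) (i : Fin X.s) :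
    X.idEntry i i = 0 ↔ E.e (X.v i) = 0 := by
  rw [idEntry_self, IdemData.castBlk_eq_zero_iff, IdemData.unitBlk_eq_zero_iff]

lemma sum_idEntry_blkMul (X : DGData E) (i : Fin X.s) {z : ι} {n : Fin X.s → ℤ}
    (G : ∀ k, E.Blk (n k) (X.v k) z) (h : ∀ k, X.l i - X.l k + n k = n i) :
    ∑ k, E.blkMul (h k) (X.idEntry i k) (G k) = G i := by
  rw [Fintype.sum_eq_single i fun k hk => by rw [X.idEntry_of_ne hk.symm, IdemData.zero_blkMul],
    idEntry_self, IdemData.castBlk_unitBlk_blkMul]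

lemma sum_blkMul_idEntry (X : DGData E) (j : Fin X.s) {z : ι} {m : Fin X.s → ℤ}
    (F : ∀ k, E.Blk (m k) z (X.v k)) (h : ∀ k, m k + (X.l k - X.l j) = m j) :
    ∑ k, E.blkMul (h k) (F k) (X.idEntry k j) = F j := by
  rw [Fintype.sum_eq_single j fun k hk => by rw [X.idEntry_of_ne hk, IdemData.blkMul_zero],
    idEntry_self, IdemData.blkMul_castBlk_unitBlk]

lemma entriesHomotopic_of_eq {X Y : DGData E}
    {F G : ∀ (i : Fin Y.s) (j : Fin X.s), E.Blk (Y.l i - X.l j) (Y.v i) (X.v j)}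
    (h : ∀ i j, F i j = G i j) : EntriesHomotopic X Y F G :=
  ⟨fun _ _ => 0, fun i j => by simp [h i j]⟩

/-- Both terms `y ∘ h` and `h ∘ x` of a homotopy vanish at `(i, j)`: a nonzero entry of `y` or
`x` raises the shift by at least one, leaving `h` an entry of negative degree. -/
lemma EntriesHomotopic.eq_of_l_le (hpos : A.Pos) {X Y : DGData E}
    {F G : ∀ (i : Fin Y.s) (j : Fin X.s), E.Blk (Y.l i - X.l j) (Y.v i) (X.v j)}
    (hFG : EntriesHomotopic X Y F G) {i : Fin Y.s} {j : Fin X.s} (hle : Y.l i ≤ X.l j) :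
    F i j = G i j := by
  obtain ⟨h, hh⟩ := hFG
  have hY : ∀ k, E.blkMul (by omega) (Y.x i k) (h k j) =
      (0 : E.Blk (Y.l i - X.l j) _ _) := fun k => by
    rcases le_or_gt k i with hk | hk
    · rw [Y.tri i k hk, IdemData.zero_blkMul]
    · have := Y.lanti i k hk.le
      rw [IdemData.blk_eq_zero_of_neg hpos (by omega) (h k j), IdemData.blkMul_zero]
  have hX : ∀ k, E.blkMul (by omega) (h i k) (X.x k j) =
      (0 : E.Blk (Y.l i - X.l j) _ _) := fun k => by
    rcases le_or_gt j k with hk | hk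
    · rw [X.tri k j hk, IdemData.blkMul_zero]
    · have := X.lanti k j hk.le
      rw [IdemData.blk_eq_zero_of_neg hpos (by omega) (h i k), IdemData.zero_blkMul]
  have := hh i j
  rwa [Fintype.sum_eq_zero _ hY, Fintype.sum_eq_zero _ hX, add_zero, sub_eq_zero] at this

lemma compEntry_self_eq_zero (hpos : A.Pos) {X Y : DGData E} (f : Map X Y) (g : Map Y X)
    {j : Fin X.s} (hj : ∀ k, Y.l k ≠ X.l j) : compEntry f g j j = 0 :=
  Fintype.sum_eq_zero _ fun k => by
    rcases lt_or_gt_of_ne (hj k) with hlt | hgt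
    · rw [IdemData.blk_eq_zero_of_neg hpos (by omega) (f.f k j), IdemData.blkMul_zero]
    · rw [IdemData.blk_eq_zero_of_neg hpos (by omega) (g.f j k), IdemData.zero_blkMul]

lemma e_eq_zero_of_htpyEquiv (hpos : A.Pos) {X Y : DGData E} (hXY : HtpyEquiv X Y)
    {j : Fin X.s} (hj : ∀ k, Y.l k ≠ X.l j) : E.e (X.v j) = 0 := by
  obtain ⟨f, g, hfg, -⟩ := hXY
  rw [← X.idEntry_eq_zero_iff, ← hfg.eq_of_l_le hpos le_rfl]
  exact compEntry_self_eq_zero hpos f g hj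

section Restrict

variable (X : DGData E) (S : Finset (Fin X.s))

noncomputable def restrictIdx (i : Fin S.card) : Fin X.s :=
  S.orderIsoOfFin rfl i

lemma restrictIdx_mem (i : Fin S.card) : X.restrictIdx S i ∈ S :=
  (S.orderIsoOfFin rfl i).2

lemma restrictIdx_monotone : Monotone (X.restrictIdx S) :=
  fun _ _ h => (S.orderIsoOfFin rfl).monotone h

lemma restrictIdx_injective : Function.Injective (X.restrictIdx S) :=
  fun _ _ h => (S.orderIsoOfFin rfl).injective (Subtype.ext h)

lemma range_restrictIdx : Set.range (X.restrictIdx S) = S := by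
  ext j
  refine ⟨fun ⟨i, hi⟩ => hi ▸ X.restrictIdx_mem S i, fun hj => ?_⟩
  exact ⟨(S.orderIsoOfFin rfl).symm ⟨j, hj⟩,
    congrArg Subtype.val ((S.orderIsoOfFin rfl).apply_symm_apply ⟨j, hj⟩)⟩

lemma sum_restrictIdx {M : Type} [AddCommMonoid M] (F : Fin X.s → M) (hF : ∀ t ∉ S, F t = 0) :
    ∑ i, F (X.restrictIdx S i) = ∑ t, F t :=
  Fintype.sum_of_injective _ (X.restrictIdx_injective S) _ _
    (fun t ht => hF t (by rwa [range_restrictIdx] at ht)) fun _ => rfl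

noncomputable def restrict (hS : ∀ j ∉ S, E.e (X.v j) = 0) : DGData E where
  s := S.card
  v i := X.v (X.restrictIdx S i)
  l i := X.l (X.restrictIdx S i)
  lanti i j h := X.lanti _ _ (X.restrictIdx_monotone S h)
  x i j := X.x (X.restrictIdx S i) (X.restrictIdx S j)
  tri i j h := X.tri _ _ (X.restrictIdx_monotone S h)
  x_sq i j := by
    -- the deleted generators have vanishing idempotent, so no term of `x²` passes through them
    rw [X.sum_restrictIdx S (fun t => E.blkMul (by omega) (X.x _ t) (X.x t _)) fun t ht => by
      rw [IdemData.blk_eq_zero_of_right (hS t ht) (X.x _ t), IdemData.zero_blkMul]]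
    exact X.x_sq _ _

lemma restrict_idEntry (hS : ∀ j ∉ S, E.e (X.v j) = 0) (i j : Fin (X.restrict S hS).s) :
    (X.restrict S hS).idEntry i j = X.idEntry (X.restrictIdx S i) (X.restrictIdx S j) := by
  obtain rfl | h := eq_or_ne i j
  · exact (idEntry_self _ i).trans (idEntry_self X _).symm
  · exact (idEntry_of_ne _ h).trans (idEntry_of_ne X ((X.restrictIdx_injective S).ne h)).symm

noncomputable def restrictProj (hS : ∀ j ∉ S, E.e (X.v j) = 0) : Map X (X.restrict S hS) where
  f i j := X.idEntry (X.restrictIdx S i) j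
  comm i j := by
    dsimp only [restrict]
    refine (X.sum_restrictIdx S
      (fun t => E.blkMul (by omega) (X.x (X.restrictIdx S i) t) (X.idEntry t j))
      fun t ht => by
        rw [IdemData.blk_eq_zero_of_right (hS t ht) (X.x _ t), IdemData.zero_blkMul]).trans ?_
    rw [sum_blkMul_idEntry]
    exact (X.sum_idEntry_blkMul _ (fun k => X.x k j) _).symm

noncomputable def restrictIncl (hS : ∀ j ∉ S, E.e (X.v j) = 0) : Map (X.restrict S hS) X where
  f i j := X.idEntry i (X.restrictIdx S j)
  comm i j := by
    dsimp only [restrict]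
    refine (X.sum_blkMul_idEntry _ (fun k => X.x i k) _).trans ?_
    refine Eq.trans ?_ (X.sum_restrictIdx S
      (fun t => E.blkMul (by omega) (X.idEntry i t) (X.x t (X.restrictIdx S j)))
      fun t ht => by
        rw [IdemData.blk_eq_zero_of_right (hS t ht) (X.idEntry i t), IdemData.zero_blkMul]).symm
    exact (X.sum_idEntry_blkMul _ (fun k => X.x k _) _).symm

lemma htpyEquiv_restrict (hS : ∀ j ∉ S, E.e (X.v j) = 0) : HtpyEquiv X (X.restrict S hS) := by
  refine ⟨X.restrictProj S hS, X.restrictIncl S hS,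
    entriesHomotopic_of_eq fun i j => ?_, entriesHomotopic_of_eq fun i j => ?_⟩
  · refine (X.sum_restrictIdx S
      (fun t => E.blkMul (by omega) (X.idEntry i t) (X.idEntry t j)) fun t ht => by
        rw [IdemData.blk_eq_zero_of_right (hS t ht) (X.idEntry i t), IdemData.zero_blkMul]).trans ?_
    exact X.sum_idEntry_blkMul _ (fun k => X.idEntry k j) _
  · rw [restrict_idEntry]
    exact X.sum_idEntry_blkMul _ (fun k => X.idEntry k _) _

end Restrict

lemma exists_inWindow_htpyEquiv_iff (hpos : A.Pos) (X : DGData E) (a b : ℤ) :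
    (∃ Y : DGData E, Y.InWindow a b ∧ HtpyEquiv X Y) ↔
      ∀ j : Fin X.s, ¬(a ≤ -X.l j ∧ -X.l j ≤ b) → E.e (X.v j) = 0 := by
  constructor
  · rintro ⟨Y, hY, hXY⟩ j hj
    exact e_eq_zero_of_htpyEquiv hpos hXY fun k hk => hj (hk ▸ hY k)
  · intro hX
    let S := Finset.univ.filter fun j => a ≤ -X.l j ∧ -X.l j ≤ b
    have hS : ∀ j ∉ S, E.e (X.v j) = 0 := fun j hj => hX j (by simpa [S] using hj)
    refine ⟨X.restrict S hS, fun k => ?_, X.htpyEquiv_restrict S hS⟩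
    exact (Finset.mem_filter.1 (X.restrictIdx_mem S k)).2

end DGData

lemma GrHom.e_eq_zero_iff {A B : GrAlg} {ι : Type} [Fintype ι] {EA : IdemData A ι}
    {EB : IdemData B ι} (φ : GrHom A B) (hφe : ∀ x, φ.f 0 (EA.e x) = EB.e x)
    (hφ0 : Function.Injective (φ.f 0)) (x : ι) : EA.e x = 0 ↔ EB.e x = 0 := by
  rw [← hφe, map_eq_zero_iff _ hφ0]

theorem statement14_general {A B : GrAlg}
    (hApos : A.Pos) (hBpos : B.Pos)
    {ι : Type} [Fintype ι]
    (EA : IdemData A ι) (EB : IdemData B ι)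
    -- the morphism `φ` with `φ⁰` an isomorphism:
    (φ : GrHom A B) (hφe : ∀ x, φ.f 0 (EA.e x) = EB.e x)
    (hφ0 : Function.Bijective (φ.f 0))
    -- an object `X` of `dgPer(A)` and a segment `I = [a,b]`:
    (X : DGData EA) (a b : ℤ) :
    -- `X ∈ dgPer^I(A)` iff `X ⊗^L_A B ∈ dgPer^I(B)`:
    (∃ Y : DGData EA, Y.InWindow a b ∧ DGData.HtpyEquiv X Y) ↔
      (∃ Z : DGData EB, Z.InWindow a b ∧ DGData.HtpyEquiv (φ.mapData hφe X) Z) := by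
  rw [DGData.exists_inWindow_htpyEquiv_iff hApos, DGData.exists_inWindow_htpyEquiv_iff hBpos]
  exact forall_congr' fun j => imp_congr_right fun _ => φ.e_eq_zero_iff hφe hφ0.injective _

theorem statement14 {A B : GrAlg}
    (hApos : A.Pos) (hBpos : B.Pos)
    {ι : Type} [Fintype ι]
    (EA : IdemData A ι) (EB : IdemData B ι)
    -- the morphism `φ` with `φ⁰` an isomorphism:
    (φ : GrHom A B) (hφe : ∀ x, φ.f 0 (EA.e x) = EB.e x)
    (hφ0 : Function.Bijective (φ.f 0))
    -- an object `X` of `dgPer(A)` and a segment `I = [a,b]`: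
    (X : DGData EA) (a b : ℤ) (hab : a ≤ b) :
    -- `X ∈ dgPer^I(A)` iff `X ⊗^L_A B ∈ dgPer^I(B)`:
    (∃ Y : DGData EA, Y.InWindow a b ∧ DGData.HtpyEquiv X Y) ↔
      (∃ Z : DGData EB, Z.InWindow a b ∧ DGData.HtpyEquiv (φ.mapData hφe X) Z) :=
  statement14_general hApos hBpos EA EB φ hφe hφ0 X a b
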